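/- arXiv:0707.3091 — 4 statements merged into one kernel-verified Lean document; each statement's English description precedes it below -/
import Mathlib

section
/- If four points p₁, p₂, p₃, p₄ on the sphere of radius 1/2 in ℝ³ satisfy Σ_{1 ≤ i < j ≤ 4} d(p_i,p_j) = 2π (where d is the intrinsic distance), then the four points form two antipodal pairs, i.e., after reindexing, p₂ = -p₁ and p₄ = -p₃. -/
/-!
Doubling the distances, the hypothesis says that the six angles between the points sum to `4π`.
By the triangle inequality for angles taken through `-a`, the three angles of any triple sum to
at most `2π`; the four triples together count every angle twice, so each triple sums to exactly
`2π`, and opposite pairs of points make equal angles. For such a triple the weighted sum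
`sin ∠(b, c) • a + sin ∠(a, c) • b + sin ∠(a, b) • c` vanishes. Writing `A, B, C` for the sines
of the angles at `a`, these four relations combine to `((B + C)² - A²) • (a + b) = 0` and its two
analogues. The equations `A = B + C`, `B = A + C`, `C = A + B` force `A = B = C = 0`, which is
incompatible with the angles at `a` summing to `2π` unless one of them is `π`. So one of
`a + b`, `a + c`, `a + d` vanishes, and then the opposite pair is antipodal as well.
-/

open Real

/-- Intrinsic distance on the sphere of radius `1/2` in `ℝ³`. -/
noncomputable def halfSphereDist (p q : EuclideanSpace ℝ (Fin 3)) : ℝ :=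
  (1 / 2) * Real.arccos (4 * inner ℝ p q)

open InnerProductGeometry
open scoped RealInnerProductSpace

namespace InnerProductGeometry

variable {V : Type*} [NormedAddCommGroup V] [InnerProductSpace ℝ V]

theorem eq_neg_of_angle_eq_pi_of_norm_eq {a b : V} (h : angle a b = π) (hn : ‖b‖ = ‖a‖) :
    b = -a := by
  have h0 : angle (-a) b = 0 := by rw [angle_neg_left, h, sub_self]
  exact (eq_of_angle_eq_zero_of_norm_eq h0 (by rw [norm_neg, hn])).symm

theorem angle_add_angle_add_angle_le_two_pi (a b c : V) :
    angle a b + angle a c + angle b c ≤ 2 * π := by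
  have := angle_le_angle_add_angle b (-a) c
  rw [angle_neg_right, angle_neg_left, angle_comm b a] at this
  linarith

theorem sin_angle_smul_add_eq_zero {a b c : V} (hb : ‖b‖ = ‖a‖) (hc : ‖c‖ = ‖a‖)
    (h : angle a b + angle a c + angle b c = 2 * π) :
    sin (angle b c) • a + sin (angle a c) • b + sin (angle a b) • c = 0 := by
  have hinner (x y : V) : ⟪x, y⟫ = cos (angle x y) * (‖x‖ * ‖y‖) :=
    (cos_angle_mul_norm_mul_norm x y).symm
  have hbc : angle b c = 2 * π - (angle a b + angle a c) := by linarith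
  rw [← @inner_self_eq_zero ℝ]
  simp only [inner_add_left, inner_add_right, real_inner_smul_left, real_inner_smul_right]
  rw [real_inner_self_eq_norm_sq, real_inner_self_eq_norm_sq, real_inner_self_eq_norm_sq,
    real_inner_comm a b, real_inner_comm a c, real_inner_comm b c, hinner a b, hinner a c,
    hinner b c, hb, hc, hbc, sin_two_pi_sub, cos_two_pi_sub, sin_add, cos_add]
  linear_combination (-‖a‖ ^ 2 * sin (angle a b) ^ 2) * sin_sq_add_cos_sq (angle a c) +
    (-‖a‖ ^ 2 * sin (angle a c) ^ 2) * sin_sq_add_cos_sq (angle a b)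

section FourVectors

variable {a b c d : V}

theorem triangle_angle_sums_eq_two_pi
    (h : angle a b + angle a c + angle a d + angle b c + angle b d + angle c d = 4 * π) :
    angle a b + angle a c + angle b c = 2 * π ∧ angle a b + angle a d + angle b d = 2 * π ∧
      angle a c + angle a d + angle c d = 2 * π ∧ angle b c + angle b d + angle c d = 2 * π := by
  have := angle_add_angle_add_angle_le_two_pi a b c
  have := angle_add_angle_add_angle_le_two_pi a b d
  have := angle_add_angle_add_angle_le_two_pi a c d
  have := angle_add_angle_add_angle_le_two_pi b c d
  refine ⟨?_, ?_, ?_, ?_⟩ <;> linarith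

theorem add_eq_zero_of_angle_sum_eq_four_pi (hb : ‖b‖ = ‖a‖) (hc : ‖c‖ = ‖a‖) (hd : ‖d‖ = ‖a‖)
    (h : angle a b + angle a c + angle a d + angle b c + angle b d + angle c d = 4 * π) :
    a + b = 0 ∨ a + c = 0 ∨ a + d = 0 := by
  obtain ⟨habc, habd, hacd, hbcd⟩ := triangle_angle_sums_eq_two_pi h
  have hcd : angle c d = angle a b := by linarith
  have hbd : angle b d = angle a c := by linarith
  have hbc : angle b c = angle a d := by linarith
  have e₁ := sin_angle_smul_add_eq_zero hb hc habc
  have e₂ := sin_angle_smul_add_eq_zero hb hd habd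
  have e₃ := sin_angle_smul_add_eq_zero hc hd hacd
  have e₄ := sin_angle_smul_add_eq_zero (hc.trans hb.symm) (hd.trans hb.symm) hbcd
  rw [hbc] at e₁ e₄
  rw [hbd] at e₂ e₄
  rw [hcd] at e₃ e₄
  set A := sin (angle a b)
  set B := sin (angle a c)
  set C := sin (angle a d)
  have hab : ((B + C) ^ 2 - A ^ 2) • (a + b) = 0 := by
    linear_combination (norm := module) (B + C) • (e₁ + e₂) - A • (e₃ + e₄)
  have hac : ((A + C) ^ 2 - B ^ 2) • (a + c) = 0 := by
    linear_combination (norm := module) (A + C) • (e₁ + e₃) - B • (e₂ + e₄)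
  have had : ((A + B) ^ 2 - C ^ 2) • (a + d) = 0 := by
    linear_combination (norm := module) (A + B) • (e₂ + e₃) - C • (e₁ + e₄)
  by_contra! hne
  obtain ⟨hab₀, hac₀, had₀⟩ := hne
  rw [smul_eq_zero, sub_eq_zero] at hab hac had
  replace hab := hab.resolve_right hab₀
  replace hac := hac.resolve_right hac₀
  replace had := had.resolve_right had₀
  have angle_eq_zero {x : V} (hx : ‖x‖ = ‖a‖) (hax : a + x ≠ 0) (hsin : sin (angle a x) = 0) :
      angle a x = 0 := by
    refine (sin_eq_zero_iff_angle_eq_zero_or_angle_eq_pi.1 hsin).resolve_right fun hpi => ?_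
    exact hax (by rw [eq_neg_of_angle_eq_pi_of_norm_eq hpi hx, add_neg_cancel])
  have hA := sin_angle_nonneg a b
  have hB := sin_angle_nonneg a c
  have hC := sin_angle_nonneg a d
  have hb₀ := angle_eq_zero hb hab₀ (by nlinarith)
  have hc₀ := angle_eq_zero hc hac₀ (by nlinarith)
  have hd₀ := angle_eq_zero hd had₀ (by nlinarith)
  linarith [pi_pos]

theorem antipodal_pairs_of_angle_sum_eq_four_pi (hb : ‖b‖ = ‖a‖) (hc : ‖c‖ = ‖a‖)
    (hd : ‖d‖ = ‖a‖)
    (h : angle a b + angle a c + angle a d + angle b c + angle b d + angle c d = 4 * π) :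
    (b = -a ∧ d = -c) ∨ (c = -a ∧ d = -b) ∨ (d = -a ∧ c = -b) := by
  by_cases ha : a = 0
  · simp_all
  obtain ⟨habc, habd, hacd, -⟩ := triangle_angle_sums_eq_two_pi h
  have angle_eq_pi {x : V} (hx : a + x = 0) : angle a x = π := by
    rw [eq_neg_of_add_eq_zero_right hx, angle_self_neg_of_nonzero ha]
  rcases add_eq_zero_of_angle_sum_eq_four_pi hb hc hd h with hab | hac | had
  · refine .inl ⟨eq_neg_of_add_eq_zero_right hab, ?_⟩
    exact eq_neg_of_angle_eq_pi_of_norm_eq (by linarith [angle_eq_pi hab]) (hd.trans hc.symm)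
  · refine .inr (.inl ⟨eq_neg_of_add_eq_zero_right hac, ?_⟩)
    exact eq_neg_of_angle_eq_pi_of_norm_eq (by linarith [angle_eq_pi hac]) (hd.trans hb.symm)
  · refine .inr (.inr ⟨eq_neg_of_add_eq_zero_right had, ?_⟩)
    exact eq_neg_of_angle_eq_pi_of_norm_eq (by linarith [angle_eq_pi had]) (hc.trans hb.symm)

end FourVectors

end InnerProductGeometry

theorem halfSphereDist_eq_angle_div_two {p q : EuclideanSpace ℝ (Fin 3)} (hp : ‖p‖ = 1 / 2)
    (hq : ‖q‖ = 1 / 2) : halfSphereDist p q = angle p q / 2 := by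
  rw [halfSphereDist, angle, hp, hq]
  ring_nf

/-- If four points on the sphere of radius `1/2` in `ℝ³` have pairwise intrinsic distances
summing to exactly `2π`, then after reindexing they form two antipodal pairs. -/
theorem antipodal_of_sum_pairwise_dist_eq_two_pi (p : Fin 4 → EuclideanSpace ℝ (Fin 3))
    (hp : ∀ i, ‖p i‖ = 1 / 2)
    (hsum : halfSphereDist (p 0) (p 1) + halfSphereDist (p 0) (p 2) +
      halfSphereDist (p 0) (p 3) + halfSphereDist (p 1) (p 2) +
      halfSphereDist (p 1) (p 3) + halfSphereDist (p 2) (p 3) = 2 * Real.pi) :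
    ∃ σ : Equiv.Perm (Fin 4), p (σ 1) = -p (σ 0) ∧ p (σ 3) = -p (σ 2) := by
  simp only [halfSphereDist_eq_angle_div_two (hp _) (hp _)] at hsum
  have hnorm (i : Fin 4) : ‖p i‖ = ‖p 0‖ := by rw [hp, hp]
  rcases antipodal_pairs_of_angle_sum_eq_four_pi (hnorm 1) (hnorm 2) (hnorm 3) (by linarith)
    with ⟨h₁, h₂⟩ | ⟨h₁, h₂⟩ | ⟨h₁, h₂⟩
  · exact ⟨1, h₁, h₂⟩
  · exact ⟨Equiv.swap 1 2, h₁, h₂⟩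
  · exact ⟨Equiv.swap 1 3, h₁, neg_eq_iff_eq_neg.mp h₂.symm⟩
end

section
/- Let R be an algebraic curvature operator on ℝⁿ, viewed as a symmetric bilinear form on Λ²ℝⁿ. If R is 2-positive, i.e., the sum of its two smallest eigenvalues is positive, then R has positive isotropic curvature: for every orthonormal 4-frame e₁, e₂, e₃, e₄ in ℝⁿ, R(e₁∧e₂ + e₃∧e₄, e₁∧e₂ + e₃∧e₄) + R(e₁∧e₃ + e₄∧e₂, e₁∧e₃ + e₄∧e₂) > 0. -/
/-!
For an orthonormal frame the bivectors `(e₁∧e₂ + e₃∧e₄)/√2` and `(e₁∧e₃ + e₄∧e₂)/√2` are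
orthonormal, so the isotropic curvature is twice the trace of `R` on the plane they span.
Expanding in an orthonormal eigenbasis, that trace is `∑ λᵢ tᵢ` with weights `0 ≤ tᵢ ≤ 1`
(Bessel's inequality) summing to `2`, and such a weighted sum is at least `λ₁ + λ₂`
(Ky Fan's inequality).
-/

open Finset
open scoped RealInnerProductSpace

theorem sum_val_lt_le_sum_mul_of_monotone {N k : ℕ} (hk : 0 < k) (hkN : k ≤ N)
    {Λ : Fin N → ℝ} (hΛ : Monotone Λ) {t : Fin N → ℝ} (ht0 : ∀ i, 0 ≤ t i) (ht1 : ∀ i, t i ≤ 1)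
    (hsum : ∑ i, t i = k) :
    ∑ i : Fin N with i.val < k, Λ i ≤ ∑ i, Λ i * t i := by
  set s : Fin N → ℝ := fun i => if i.val < k then 1 else 0
  set m := Λ ⟨k - 1, by omega⟩
  have hs : ∑ i, s i = k := by simp [s, Fin.card_filter_val_lt, hkN]
  -- `m` separates the `k` smallest values of `Λ` from the others, where `t - s` changes sign.
  have hterm : ∀ i, 0 ≤ (Λ i - m) * (t i - s i) := by
    intro i
    by_cases hi : i.val < k
    · have : Λ i ≤ m := hΛ (Fin.mk_le_mk.mpr (by omega) : i ≤ _)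
      exact mul_nonneg_of_nonpos_of_nonpos (by linarith) (by simp [s, hi, ht1])
    · have : m ≤ Λ i := hΛ (Fin.mk_le_of_le_val (by omega))
      exact mul_nonneg (by linarith) (by simp [s, hi, ht0])
  calc ∑ i : Fin N with i.val < k, Λ i = ∑ i, Λ i * s i := by simp [s, sum_filter]
    _ ≤ ∑ i, Λ i * s i + ∑ i, (Λ i - m) * (t i - s i) :=
      le_add_of_nonneg_right (sum_nonneg fun i _ => hterm i)
    _ = ∑ i, Λ i * t i := by
      simp only [sub_mul, mul_sub, sum_sub_distrib, ← mul_sum, hsum, hs]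
      ring

theorem Fin.sum_filter_val_lt_two {M : Type*} [AddCommMonoid M] {N : ℕ} (hN : 1 < N)
    (f : Fin N → M) : ∑ i : Fin N with i.val < 2, f i = f ⟨0, by omega⟩ + f ⟨1, by omega⟩ := by
  rw [← sum_pair (f := f) (by simp)]
  congr 1
  ext i
  simp only [mem_filter, mem_univ, true_and, mem_insert, mem_singleton, Fin.ext_iff]
  omega

section

variable {V : Type*} [NormedAddCommGroup V] [InnerProductSpace ℝ V]

theorem LinearMap.IsSymmetric.inner_map_self_eq_sum {ι : Type*} [Fintype ι] {R : V →ₗ[ℝ] V}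
    (hR : R.IsSymmetric) {Λ : ι → ℝ} (b : OrthonormalBasis ι ℝ V)
    (heig : ∀ i, R (b i) = Λ i • b i) (x : V) :
    ⟪R x, x⟫ = ∑ i, Λ i * ⟪b i, x⟫ ^ 2 := by
  rw [← b.sum_inner_mul_inner (R x) x]
  refine sum_congr rfl fun i _ => ?_
  rw [hR, heig, real_inner_smul_right, real_inner_comm x]
  ring

theorem LinearMap.IsSymmetric.sum_val_lt_le_sum_inner_map_self {N k : ℕ} (hk : 0 < k)
    (hkN : k ≤ N) {R : V →ₗ[ℝ] V} (hR : R.IsSymmetric) {Λ : Fin N → ℝ} (hΛ : Monotone Λ)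
    (b : OrthonormalBasis (Fin N) ℝ V) (heig : ∀ i, R (b i) = Λ i • b i)
    {u : Fin k → V} (hu : Orthonormal ℝ u) :
    ∑ i : Fin N with i.val < k, Λ i ≤ ∑ j, ⟪R (u j), u j⟫ := by
  set t : Fin N → ℝ := fun i => ∑ j, ⟪b i, u j⟫ ^ 2
  have ht1 : ∀ i, t i ≤ 1 := by
    intro i
    simpa [t, real_inner_comm (b i)] using hu.sum_inner_products_le (b i) (s := univ)
  have hsum : ∑ i, t i = k := by
    rw [sum_comm]
    simp [b.sum_sq_inner_right, hu.norm_eq_one]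
  calc ∑ i : Fin N with i.val < k, Λ i ≤ ∑ i, Λ i * t i :=
        sum_val_lt_le_sum_mul_of_monotone hk hkN hΛ (fun i => by positivity) ht1 hsum
    _ = ∑ j, ⟪R (u j), u j⟫ := by
      simp only [t, hR.inner_map_self_eq_sum b heig, mul_sum]
      exact sum_comm

variable {E : Type*} [NormedAddCommGroup E] [InnerProductSpace ℝ E] {w : E →ₗ[ℝ] E →ₗ[ℝ] V}

theorem inner_apply_apply_of_orthonormal {ι : Type*} [DecidableEq ι]
    (hw : ∀ a b c d : E, ⟪w a b, w c d⟫ = ⟪a, c⟫ * ⟪b, d⟫ - ⟪a, d⟫ * ⟪b, c⟫)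
    {e : ι → E} (he : Orthonormal ℝ e) (i j k l : ι) :
    ⟪w (e i) (e j), w (e k) (e l)⟫ =
      (if i = k then 1 else 0) * (if j = l then 1 else 0) -
        (if i = l then 1 else 0) * (if j = k then 1 else 0) := by
  simp only [hw, orthonormal_iff_ite.mp he]

theorem orthonormal_isotropic_pair
    (hw : ∀ a b c d : E, ⟪w a b, w c d⟫ = ⟪a, c⟫ * ⟪b, d⟫ - ⟪a, d⟫ * ⟪b, c⟫)
    {e : Fin 4 → E} (he : Orthonormal ℝ e) :
    Orthonormal ℝ ![(√2)⁻¹ • (w (e 0) (e 1) + w (e 2) (e 3)),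
      (√2)⁻¹ • (w (e 0) (e 2) + w (e 3) (e 1))] := by
  set u := w (e 0) (e 1) + w (e 2) (e 3)
  set v := w (e 0) (e 2) + w (e 3) (e 1)
  have hwe := inner_apply_apply_of_orthonormal hw he
  have hu : ‖u‖ = √2 := by
    rw [norm_eq_sqrt_real_inner]
    simp only [u, inner_add_left, inner_add_right, hwe, Fin.reduceEq, if_false, if_true]
    norm_num
  have hv : ‖v‖ = √2 := by
    rw [norm_eq_sqrt_real_inner]
    simp only [v, inner_add_left, inner_add_right, hwe, Fin.reduceEq, if_false, if_true]
    norm_num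
  have huv : ⟪u, v⟫ = 0 := by
    simp only [u, v, inner_add_left, inner_add_right, hwe, Fin.reduceEq, if_false, if_true]
    norm_num
  simp [norm_smul, hu, hv, real_inner_smul_left, real_inner_smul_right, huv,
    abs_of_nonneg (Real.sqrt_nonneg 2)]

end

/-- `V` plays the role of `Λ²ℝⁿ`: `w` is the wedge product, pinned down by the standard formula
for the induced inner product, and the eigenvalues of the self-adjoint operator `R` are listed
in increasing order by `Λ` along an orthonormal eigenbasis `b`. -/
theorem positive_isotropic_of_two_positive {n N : ℕ} (hN : 2 ≤ N)
    {V : Type*} [NormedAddCommGroup V] [InnerProductSpace ℝ V]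
    (w : EuclideanSpace ℝ (Fin n) →ₗ[ℝ] EuclideanSpace ℝ (Fin n) →ₗ[ℝ] V)
    (hw : ∀ a b c d : EuclideanSpace ℝ (Fin n),
      ⟪w a b, w c d⟫ = ⟪a, c⟫ * ⟪b, d⟫ - ⟪a, d⟫ * ⟪b, c⟫)
    (R : V →ₗ[ℝ] V) (hR : LinearMap.IsSymmetric R)
    (Λ : Fin N → ℝ) (hΛ : Monotone Λ)
    (b : OrthonormalBasis (Fin N) ℝ V) (heig : ∀ i, R (b i) = Λ i • b i)
    (h2pos : 0 < Λ ⟨0, by omega⟩ + Λ ⟨1, by omega⟩)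
    (e : Fin 4 → EuclideanSpace ℝ (Fin n)) (he : Orthonormal ℝ e) :
    0 < ⟪R (w (e 0) (e 1) + w (e 2) (e 3)), w (e 0) (e 1) + w (e 2) (e 3)⟫ +
        ⟪R (w (e 0) (e 2) + w (e 3) (e 1)), w (e 0) (e 2) + w (e 3) (e 1)⟫ := by
  have hKyFan :=
    hR.sum_val_lt_le_sum_inner_map_self two_pos hN hΛ b heig (orthonormal_isotropic_pair hw he)
  have hsq : (√2)⁻¹ * (√2)⁻¹ = (2 : ℝ)⁻¹ := by rw [← mul_inv, Real.mul_self_sqrt zero_le_two]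
  rw [Fin.sum_filter_val_lt_two hN, Fin.sum_univ_two] at hKyFan
  simp only [Matrix.cons_val_zero, Matrix.cons_val_one, map_smul, real_inner_smul_left,
    real_inner_smul_right, ← mul_assoc, hsq] at hKyFan
  linarith
end

section
/- Let R be an algebraic curvature operator on ℝⁿ whose associated sectional curvatures all lie in the interval (1/4, 1]. Then R has positive isotropic curvature: for all orthonormal vectors e₁, e₂, e₃, e₄, R(e₁∧e₂ + e₃∧e₄, e₁∧e₂ + e₃∧e₄) + R(e₁∧e₃ + e₄∧e₂, e₁∧e₃ + e₄∧e₂) > 0. -/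
open scoped RealInnerProductSpace

/-!
Write `R(x, y, z, t) = ⟪R (x ∧ y), z ∧ t⟫`. Expanding, the isotropic curvature of the frame
`e₀, …, e₃` is `K₀₁ + K₂₃ + K₀₂ + K₃₁ + 2 (R(e₀, e₁, e₂, e₃) + R(e₀, e₂, e₃, e₁))`, and the
Bianchi identity turns the mixed part into `-2 R(e₁, e₂, e₀, e₃)`. Berger's lemma bounds a
curvature term on an orthonormal quadruple of a `(δ, Δ)`-pinched operator by `2/3 (Δ - δ)`,
which is `1/2` here, while the four sectional curvatures add up to more than `1`.

Berger's lemma is polarization twice: `R(x+z, y, x+z, y) - R(x-z, y, x-z, y) = 4 R(x, y, z, y)`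
bounds `R(x, y, z, y)` by `(Δ - δ) / 2`; polarizing `y` in that term bounds
`R(x, y, z, t) + R(x, t, z, y)` by `Δ - δ`; and by the Bianchi identity `3 R(x, y, z, t)` is the
difference of two such sums.
-/

theorem orthonormal_pair_iff {E : Type*} [NormedAddCommGroup E] [InnerProductSpace ℝ E]
    {u v : E} : Orthonormal ℝ ![u, v] ↔ ‖u‖ = 1 ∧ ‖v‖ = 1 ∧ ⟪u, v⟫ = 0 := by
  refine ⟨fun h => ⟨h.1 0, h.1 1, h.2 zero_ne_one⟩, fun ⟨hu, hv, huv⟩ => ⟨?_, ?_⟩⟩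
  · intro i
    fin_cases i <;> simpa
  · intro i j hij
    fin_cases i <;> fin_cases j <;> simp_all [real_inner_comm]

theorem LinearMap.IsSymmetric.inner_map_add_add {E : Type*} [NormedAddCommGroup E]
    [InnerProductSpace ℝ E] {T : E →ₗ[ℝ] E} (hT : T.IsSymmetric) (a b : E) :
    ⟪T (a + b), a + b⟫ = ⟪T a, a⟫ + 2 * ⟪T a, b⟫ + ⟪T b, b⟫ := by
  rw [map_add, inner_add_left, inner_add_right, inner_add_right, hT b a, real_inner_comm b (T a)]
  ring

theorem LinearMap.IsSymmetric.inner_map_sub_sub {E : Type*} [NormedAddCommGroup E]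
    [InnerProductSpace ℝ E] {T : E →ₗ[ℝ] E} (hT : T.IsSymmetric) (a b : E) :
    ⟪T (a - b), a - b⟫ = ⟪T a, a⟫ - 2 * ⟪T a, b⟫ + ⟪T b, b⟫ := by
  rw [map_sub, inner_sub_left, inner_sub_right, inner_sub_right, hT b a, real_inner_comm b (T a)]
  ring

section Pinching

variable {E V : Type*} [NormedAddCommGroup E] [InnerProductSpace ℝ E]
  [NormedAddCommGroup V] [InnerProductSpace ℝ V]

theorem isAlt_of_inner_wedge {w : E →ₗ[ℝ] E →ₗ[ℝ] V}
    (hw : ∀ a b c d : E, ⟪w a b, w c d⟫ = ⟪a, c⟫ * ⟪b, d⟫ - ⟪a, d⟫ * ⟪b, c⟫) : w.IsAlt :=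
  fun a => inner_self_eq_zero.mp (by rw [hw]; ring)

/-- Pointwise `(δ, Δ)`-pinching, in the form homogeneous in the spanning vectors. -/
def IsPinched (w : E →ₗ[ℝ] E →ₗ[ℝ] V) (R : V →ₗ[ℝ] V) (δ Δ : ℝ) : Prop :=
  ∀ u v : E, ⟪u, v⟫ = 0 →
    δ * (‖u‖ ^ 2 * ‖v‖ ^ 2) ≤ ⟪R (w u v), w u v⟫ ∧ ⟪R (w u v), w u v⟫ ≤ Δ * (‖u‖ ^ 2 * ‖v‖ ^ 2)

variable {w : E →ₗ[ℝ] E →ₗ[ℝ] V} {R : V →ₗ[ℝ] V} {δ Δ : ℝ}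

namespace IsPinched

theorem of_orthonormal
    (h : ∀ u v : E, Orthonormal ℝ ![u, v] → δ ≤ ⟪R (w u v), w u v⟫ ∧ ⟪R (w u v), w u v⟫ ≤ Δ) :
    IsPinched w R δ Δ := by
  intro u v huv
  rcases eq_or_ne u 0 with rfl | hu
  · simp
  rcases eq_or_ne v 0 with rfl | hv
  · simp
  have hunit : Orthonormal ℝ ![‖u‖⁻¹ • u, ‖v‖⁻¹ • v] :=
    orthonormal_pair_iff.2 ⟨norm_smul_inv_norm hu, norm_smul_inv_norm hv,
      by simp [real_inner_smul_left, real_inner_smul_right, huv]⟩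
  have hscale : ⟪R (w (‖u‖⁻¹ • u) (‖v‖⁻¹ • v)), w (‖u‖⁻¹ • u) (‖v‖⁻¹ • v)⟫ =
      ⟪R (w u v), w u v⟫ / (‖u‖ ^ 2 * ‖v‖ ^ 2) := by
    simp only [map_smul, LinearMap.smul_apply, real_inner_smul_left, real_inner_smul_right]
    field_simp
  have hpos : 0 < ‖u‖ ^ 2 * ‖v‖ ^ 2 := by positivity
  obtain ⟨hlo, hhi⟩ := h _ _ hunit
  rw [hscale] at hlo hhi
  exact ⟨(le_div_iff₀ hpos).1 hlo, (div_le_iff₀ hpos).1 hhi⟩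

theorem abs_curvature_xyzy_le (hK : IsPinched w R δ Δ) (hR : R.IsSymmetric) {x y z : E}
    (hxz : ⟪x, z⟫ = 0) (hnorm : ‖x‖ = ‖z‖) (hxy : ⟪x, y⟫ = 0) (hzy : ⟪z, y⟫ = 0) :
    |⟪R (w x y), w z y⟫| ≤ (Δ - δ) / 2 * (‖x‖ ^ 2 * ‖y‖ ^ 2) := by
  have hpolar : ⟪R (w (x + z) y), w (x + z) y⟫ - ⟪R (w (x - z) y), w (x - z) y⟫ =
      4 * ⟪R (w x y), w z y⟫ := by
    rw [map_add, map_sub, LinearMap.add_apply, LinearMap.sub_apply, hR.inner_map_add_add,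
      hR.inner_map_sub_sub]
    ring
  have hadd := hK (x + z) y (by rw [inner_add_left, hxy, hzy, add_zero])
  have hsub := hK (x - z) y (by rw [inner_sub_left, hxy, hzy, sub_zero])
  rw [norm_add_sq_real, hxz, ← hnorm] at hadd
  rw [norm_sub_sq_real, hxz, ← hnorm] at hsub
  rw [abs_le]
  constructor <;> linarith

theorem abs_curvature_add_curvature_le (hK : IsPinched w R δ Δ) (hR : R.IsSymmetric)
    {ι : Type*} {e : ι → E} (he : Orthonormal ℝ e) {i j k l : ι}
    (hij : i ≠ j) (hik : i ≠ k) (hil : i ≠ l) (hjk : j ≠ k) (hjl : j ≠ l) (hkl : k ≠ l) :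
    |⟪R (w (e i) (e j)), w (e k) (e l)⟫ + ⟪R (w (e i) (e l)), w (e k) (e j)⟫| ≤ Δ - δ := by
  have hpolar : ⟪R (w (e i) (e j + e l)), w (e k) (e j + e l)⟫ -
      ⟪R (w (e i) (e j - e l)), w (e k) (e j - e l)⟫ =
      2 * (⟪R (w (e i) (e j)), w (e k) (e l)⟫ + ⟪R (w (e i) (e l)), w (e k) (e j)⟫) := by
    simp only [map_add, map_sub, inner_add_left, inner_add_right, inner_sub_left,
      inner_sub_right]
    ring
  have hnorm : ‖e i‖ = ‖e k‖ := by rw [he.1 i, he.1 k]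
  have hadd := hK.abs_curvature_xyzy_le hR (y := e j + e l) (he.2 hik) hnorm
    (by rw [inner_add_right, he.2 hij, he.2 hil, add_zero])
    (by rw [inner_add_right, he.2 hjk.symm, he.2 hkl, add_zero])
  have hsub := hK.abs_curvature_xyzy_le hR (y := e j - e l) (he.2 hik) hnorm
    (by rw [inner_sub_right, he.2 hij, he.2 hil, sub_zero])
    (by rw [inner_sub_right, he.2 hjk.symm, he.2 hkl, sub_zero])
  rw [norm_add_sq_real, he.2 hjl, he.1 i, he.1 j, he.1 l] at hadd
  rw [norm_sub_sq_real, he.2 hjl, he.1 i, he.1 j, he.1 l] at hsub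
  rw [abs_le] at hadd hsub ⊢
  constructor <;> linarith

/-- Berger's lemma. -/
theorem abs_curvature_le (hK : IsPinched w R δ Δ) (hR : R.IsSymmetric) (hw : w.IsAlt)
    (hBianchi : ∀ x y z t : E,
      ⟪R (w x y), w z t⟫ + ⟪R (w y z), w x t⟫ + ⟪R (w z x), w y t⟫ = 0)
    {ι : Type*} {e : ι → E} (he : Orthonormal ℝ e) {i j k l : ι}
    (hij : i ≠ j) (hik : i ≠ k) (hil : i ≠ l) (hjk : j ≠ k) (hjl : j ≠ l) (hkl : k ≠ l) :
    |⟪R (w (e i) (e j)), w (e k) (e l)⟫| ≤ 2 / 3 * (Δ - δ) := by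
  have hswap : ∀ x y z t : E, ⟪R (w y x), w z t⟫ = -⟪R (w x y), w z t⟫ := fun x y z t => by
    rw [← hw.neg, map_neg, inner_neg_left]
  have hpair : ∀ x y z t : E, ⟪R (w x y), w z t⟫ = ⟪R (w z t), w x y⟫ := fun x y z t => by
    rw [hR, real_inner_comm]
  have hthree : 3 * ⟪R (w (e i) (e j)), w (e k) (e l)⟫ =
      (⟪R (w (e i) (e j)), w (e k) (e l)⟫ + ⟪R (w (e i) (e l)), w (e k) (e j)⟫) -
      (⟪R (w (e j) (e i)), w (e k) (e l)⟫ + ⟪R (w (e j) (e l)), w (e k) (e i)⟫) := by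
    have := hBianchi (e i) (e j) (e k) (e l)
    rw [hswap (e i) (e j), hpair (e i) (e l), hpair (e j) (e l), hswap (e j) (e k)]
    linarith
  have hfirst := hK.abs_curvature_add_curvature_le hR he hij hik hil hjk hjl hkl
  have hsecond := hK.abs_curvature_add_curvature_le hR he hij.symm hjk hjl hik hil hkl
  rw [abs_le] at hfirst hsecond ⊢
  constructor <;> linarith

end IsPinched

end Pinching

/-- `V` plays the role of `Λ²ℝⁿ` and `w` of the wedge product, pinned down by the formula for
the induced inner product. -/
theorem positive_isotropic_of_quarter_pinched_general {n : ℕ}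
    {V : Type*} [NormedAddCommGroup V] [InnerProductSpace ℝ V]
    (w : EuclideanSpace ℝ (Fin n) →ₗ[ℝ] EuclideanSpace ℝ (Fin n) →ₗ[ℝ] V)
    (hw : ∀ a b c d : EuclideanSpace ℝ (Fin n),
      ⟪w a b, w c d⟫ = ⟪a, c⟫ * ⟪b, d⟫ - ⟪a, d⟫ * ⟪b, c⟫)
    (R : V →ₗ[ℝ] V) (hR : LinearMap.IsSymmetric R)
    (hBianchi : ∀ x y z t : EuclideanSpace ℝ (Fin n),
      ⟪R (w x y), w z t⟫ + ⟪R (w y z), w x t⟫ + ⟪R (w z x), w y t⟫ = 0)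
    (hpinch : ∀ u v : EuclideanSpace ℝ (Fin n), Orthonormal ℝ ![u, v] →
      1 / 4 < ⟪R (w u v), w u v⟫ ∧ ⟪R (w u v), w u v⟫ ≤ 1)
    (e : Fin 4 → EuclideanSpace ℝ (Fin n)) (he : Orthonormal ℝ e) :
    0 < ⟪R (w (e 0) (e 1) + w (e 2) (e 3)), w (e 0) (e 1) + w (e 2) (e 3)⟫ +
        ⟪R (w (e 0) (e 2) + w (e 3) (e 1)), w (e 0) (e 2) + w (e 3) (e 1)⟫ := by
  have hsec : ∀ i j, i ≠ j → 1 / 4 < ⟪R (w (e i) (e j)), w (e i) (e j)⟫ := fun i j hij =>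
    (hpinch _ _ (orthonormal_pair_iff.2 ⟨he.1 i, he.1 j, he.2 hij⟩)).1
  have hK : IsPinched w R (1 / 4) 1 :=
    .of_orthonormal fun u v huv => ⟨(hpinch u v huv).1.le, (hpinch u v huv).2⟩
  have hwalt := isAlt_of_inner_wedge hw
  have hberger := hK.abs_curvature_le hR hwalt hBianchi he (i := 1) (j := 2) (k := 0) (l := 3)
    (by decide) (by decide) (by decide) (by decide) (by decide) (by decide)
  have hmixed := hBianchi (e 0) (e 1) (e 2) (e 3)
  rw [← hwalt.neg (e 0) (e 2), ← hwalt.neg (e 3) (e 1), map_neg, inner_neg_left,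
    inner_neg_right, neg_neg] at hmixed
  rw [hR.inner_map_add_add, hR.inner_map_add_add]
  linarith [hsec 0 1 (by decide), hsec 2 3 (by decide), hsec 0 2 (by decide),
    hsec 3 1 (by decide), (abs_le.1 hberger).2]

/-- An algebraic curvature operator (a symmetric operator on `Λ²ℝⁿ` satisfying the first
Bianchi identity) whose sectional curvatures all lie in `(1/4, 1]` has positive isotropic
curvature.  Here `V` plays the role of `Λ²ℝⁿ` and `w` is the wedge product, pinned down by
the standard formula for the induced inner product. -/
theorem positive_isotropic_of_quarter_pinched {n : ℕ} (hn : 4 ≤ n)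
    {V : Type*} [NormedAddCommGroup V] [InnerProductSpace ℝ V]
    (w : EuclideanSpace ℝ (Fin n) →ₗ[ℝ] EuclideanSpace ℝ (Fin n) →ₗ[ℝ] V)
    (hw : ∀ a b c d : EuclideanSpace ℝ (Fin n),
      ⟪w a b, w c d⟫ = ⟪a, c⟫ * ⟪b, d⟫ - ⟪a, d⟫ * ⟪b, c⟫)
    (R : V →ₗ[ℝ] V) (hR : LinearMap.IsSymmetric R)
    (hBianchi : ∀ x y z t : EuclideanSpace ℝ (Fin n),
      ⟪R (w x y), w z t⟫ + ⟪R (w y z), w x t⟫ + ⟪R (w z x), w y t⟫ = 0)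
    (hpinch : ∀ u v : EuclideanSpace ℝ (Fin n), Orthonormal ℝ ![u, v] →
      1 / 4 < ⟪R (w u v), w u v⟫ ∧ ⟪R (w u v), w u v⟫ ≤ 1)
    (e : Fin 4 → EuclideanSpace ℝ (Fin n)) (he : Orthonormal ℝ e) :
    0 < ⟪R (w (e 0) (e 1) + w (e 2) (e 3)), w (e 0) (e 1) + w (e 2) (e 3)⟫ +
        ⟪R (w (e 0) (e 2) + w (e 3) (e 1)), w (e 0) (e 2) + w (e 3) (e 1)⟫ :=
  positive_isotropic_of_quarter_pinched_general w hw R hR hBianchi hpinch e he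
end

section
/- Let (φ_{ij})_{1 ≤ i < j ≤ k} be angles in [0, π] between k unit vectors in ℝⁿ, all satisfying φ_{ij} ≥ π/2 - 2^{-n} with n ≥ 4. Then k ≤ 2^{2n}; more precisely, if unit vectors v₁, …, v_k ∈ ℝⁿ satisfy ⟨v_i, v_j⟩ ≤ sin(2^{-n}) for all i ≠ j, then k ≤ 2^{2n}. -/
/-!
Vectors whose pairwise inner products are at most `sin (2⁻ⁿ) ≤ 1/2` are unit vectors at mutual
distance at least `1`, so the balls of radius `1/2` around them are disjoint and lie in the ball
of radius `3/2` around the origin. Comparing volumes gives `k ≤ 3ⁿ ≤ 4ⁿ`.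
-/

open Real MeasureTheory Metric Module

theorem card_mul_pow_finrank_le_of_separated {E ι : Type*} [NormedAddCommGroup E]
    [NormedSpace ℝ E] [FiniteDimensional ℝ E] [Fintype ι] (x : ι → E) {r R : ℝ} (hr : 0 < r)
    (hR : 0 ≤ R) (hx : ∀ i, ‖x i‖ ≤ R) (hsep : Pairwise fun i j ↦ 2 * r ≤ dist (x i) (x j)) :
    (Fintype.card ι : ℝ) * r ^ finrank ℝ E ≤ (R + r) ^ finrank ℝ E := by
  borelize E
  let μ : Measure E := Measure.addHaar
  have hRr : 0 < R + r := by linarith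
  have hdisj : Pairwise (Function.onFun Disjoint fun i ↦ ball (x i) r) := fun i j hij ↦
    ball_disjoint_ball (by linarith [hsep hij])
  have hsub : (⋃ i, ball (x i) r) ⊆ ball 0 (R + r) := by
    refine Set.iUnion_subset fun i y hy ↦ ?_
    rw [mem_ball, dist_zero_right] at *
    linarith [norm_le_norm_add_norm_sub' y (x i), hx i, dist_eq_norm y (x i)]
  have hvol : ∑ i, μ (ball (x i) r) ≤ μ (ball 0 (R + r)) := by
    rw [← tsum_fintype (L := .unconditional _), ← measure_iUnion hdisj fun _ ↦ measurableSet_ball]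
    exact measure_mono hsub
  simp only [Measure.addHaar_ball_of_pos μ _ hr, Measure.addHaar_ball_of_pos μ _ hRr,
    Finset.sum_const, Finset.card_univ, nsmul_eq_mul, ← mul_assoc] at hvol
  have hunit : μ (ball 0 1) ≠ 0 := (measure_ball_pos μ 0 one_pos).ne'
  rwa [ENNReal.mul_le_mul_iff_left hunit measure_ball_lt_top.ne, ← ENNReal.ofReal_natCast,
    ← ENNReal.ofReal_mul (by positivity), ENNReal.ofReal_le_ofReal_iff (by positivity)] at hvol

theorem one_le_dist_of_inner_le_half {F : Type*} [NormedAddCommGroup F] [InnerProductSpace ℝ F]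
    {u w : F} (hu : ‖u‖ = 1) (hw : ‖w‖ = 1) (h : inner ℝ u w ≤ 1 / 2) : 1 ≤ dist u w := by
  have hsq : ‖u - w‖ ^ 2 = 2 - 2 * inner ℝ u w := by
    rw [norm_sub_sq_real, hu, hw]; ring
  rw [dist_eq_norm]
  nlinarith [norm_nonneg (u - w)]

theorem card_le_three_pow_finrank_of_inner_le_half {F ι : Type*} [NormedAddCommGroup F]
    [InnerProductSpace ℝ F] [FiniteDimensional ℝ F] [Fintype ι] (v : ι → F)
    (hv : ∀ i, ‖v i‖ = 1) (h : Pairwise fun i j ↦ inner ℝ (v i) (v j) ≤ 1 / 2) :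
    Fintype.card ι ≤ 3 ^ finrank ℝ F := by
  have hvol := card_mul_pow_finrank_le_of_separated v (r := 1 / 2) one_half_pos zero_le_one
    (fun i ↦ (hv i).le) fun i j hij ↦ by
      linarith [one_le_dist_of_inner_le_half (hv i) (hv j) (h hij)]
  rw [show (1 : ℝ) + 1 / 2 = 3 * (1 / 2) by norm_num, mul_pow] at hvol
  exact_mod_cast le_of_mul_le_mul_right hvol (by positivity)

theorem sin_two_zpow_neg_le_half {n : ℕ} (hn : 1 ≤ n) : sin ((2 : ℝ) ^ (-(n : ℤ))) ≤ 1 / 2 :=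
  calc sin ((2 : ℝ) ^ (-(n : ℤ))) ≤ (2 : ℝ) ^ (-(n : ℤ)) := sin_le (by positivity)
    _ ≤ (2 : ℝ) ^ (-1 : ℤ) := zpow_le_zpow_right₀ one_le_two (by omega)
    _ = 1 / 2 := by norm_num

/-- Packing bound used for Gromov's corank estimate: if `k` unit vectors in `ℝⁿ` (`n ≥ 4`)
have pairwise inner products at most `sin(2^{-n})` (i.e. pairwise angles at least
`π/2 - 2^{-n}`), then `k ≤ 2^{2n}`. -/
theorem packing_bound_near_orthogonal (n k : ℕ) (hn : 4 ≤ n)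
    (v : Fin k → EuclideanSpace ℝ (Fin n)) (hv : ∀ i, ‖v i‖ = 1)
    (hangle : ∀ i j, i ≠ j →
      (inner ℝ (v i) (v j) : ℝ) ≤ Real.sin ((2 : ℝ) ^ (-(n : ℤ)))) :
    k ≤ 2 ^ (2 * n) := by
  have hcard := card_le_three_pow_finrank_of_inner_le_half v hv fun i j hij ↦
    (hangle i j hij).trans (sin_two_zpow_neg_le_half (by omega))
  rw [Fintype.card_fin, finrank_euclideanSpace_fin] at hcard
  calc k ≤ 3 ^ n := hcard
    _ ≤ 4 ^ n := Nat.pow_le_pow_left (by norm_num) n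
    _ = 2 ^ (2 * n) := by rw [pow_mul]; norm_num
end
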